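/- arXiv:2006.15574 — 2 statements merged into one kernel-verified Lean document; each statement's English description precedes it below -/
import Mathlib

section
/- Let M_n^r = Ψ_n^r Λ^r (Ψ_n^r)^T where Λ^r = diag(λ_0,...,λ_{r-1}) and (Ψ_n^r)_{i,k} = ψ_k(X_i)/√n, and let u_i be the i-th column of Ψ_n^r. Set E = (Ψ_n^r)^T Ψ_n^r − Id_r, C = ‖E‖_op², and K = max_i |λ_i|. Then ‖M_n^r u_i − λ_i u_i‖₂² ≤ K²(√C + 1)·C. -/
/-!
Write `E = ΨᵀΨ - 1` and `u_i = Ψ eᵢ`. Then `M u_i - λ_i u_i = Ψ Λ (ΨᵀΨ - 1) eᵢ = Ψ Λ E eᵢ`.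
Since `‖Ψ v‖² = ⟪v, ΨᵀΨ v⟫ = ‖v‖² + ⟪v, E v⟫ ≤ (1 + ‖E‖) ‖v‖²`, `‖Λ v‖ ≤ K ‖v‖` and
`‖E eᵢ‖ ≤ ‖E‖ = √C`, the squared residual is at most `(1 + √C) K² C`.
-/

open Matrix WithLp
open scoped RealInnerProductSpace

namespace Matrix

variable {m n : Type*} [Fintype m] [Fintype n] [DecidableEq n]

theorem mul_diagonal_mul_transpose_mulVec_col_sub {R : Type*} [CommRing R]
    (Ψ : Matrix m n R) (d : n → R) (i : n) :
    (Ψ * diagonal d * Ψᵀ) *ᵥ Ψ.col i - d i • Ψ.col i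
      = Ψ *ᵥ (diagonal d *ᵥ ((Ψᵀ * Ψ - 1) *ᵥ Pi.single i 1)) := by
  have hdiag : Ψ *ᵥ (diagonal d *ᵥ Pi.single i 1) = d i • Ψ.col i := by
    have hsingle : diagonal d *ᵥ Pi.single i 1 = d i • Pi.single i 1 := by
      ext j
      by_cases hj : j = i <;> simp [mulVec_diagonal, hj]
    rw [hsingle, mulVec_smul, mulVec_single_one]
  rw [sub_mulVec, one_mulVec, mulVec_sub, mulVec_sub, hdiag, ← mulVec_single_one Ψ i,
    mulVec_mulVec, mulVec_mulVec, mulVec_mulVec, Matrix.mul_assoc _ Ψᵀ]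

theorem sq_norm_toLp_mulVec_le (A : Matrix m n ℝ) (x : n → ℝ) :
    ‖toLp 2 (A *ᵥ x)‖ ^ 2
      ≤ (1 + ‖toEuclideanCLM (𝕜 := ℝ) (n := n) (Aᵀ * A - 1)‖) * ‖toLp 2 x‖ ^ 2 := by
  set E := toEuclideanCLM (𝕜 := ℝ) (n := n) (Aᵀ * A - 1)
  have hquad : ‖toLp 2 (A *ᵥ x)‖ ^ 2 = ‖toLp 2 x‖ ^ 2 + ⟪toLp 2 x, E (toLp 2 x)⟫ := by
    rw [inner_toEuclideanCLM, ← real_inner_self_eq_norm_sq, ← real_inner_self_eq_norm_sq,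
      EuclideanSpace.inner_toLp_toLp, EuclideanSpace.inner_toLp_toLp]
    simp only [star_trivial]
    rw [sub_mulVec, one_mulVec, dotProduct_sub, ← mulVec_mulVec, mulVec_transpose,
      dotProduct_comm x ((A *ᵥ x) ᵥ* A), ← dotProduct_mulVec]
    ring
  have hE : ⟪toLp 2 x, E (toLp 2 x)⟫ ≤ ‖E‖ * ‖toLp 2 x‖ ^ 2 :=
    calc ⟪toLp 2 x, E (toLp 2 x)⟫ ≤ ‖toLp 2 x‖ * ‖E (toLp 2 x)‖ := real_inner_le_norm _ _
      _ ≤ ‖toLp 2 x‖ * (‖E‖ * ‖toLp 2 x‖) := by gcongr; exact E.le_opNorm _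
      _ = ‖E‖ * ‖toLp 2 x‖ ^ 2 := by ring
  linarith

theorem sq_norm_toLp_diagonal_mulVec_le {d : n → ℝ} {K : ℝ} (hd : ∀ i, |d i| ≤ K)
    (x : n → ℝ) : ‖toLp 2 (diagonal d *ᵥ x)‖ ^ 2 ≤ K ^ 2 * ‖toLp 2 x‖ ^ 2 := by
  simp only [EuclideanSpace.real_norm_sq_eq, mulVec_diagonal, Finset.mul_sum, mul_pow]
  refine Finset.sum_le_sum fun i _ => mul_le_mul_of_nonneg_right ?_ (sq_nonneg _)
  exact sq_le_sq' (neg_le_of_abs_le (hd i)) (le_of_abs_le (hd i))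

theorem norm_toLp_mulVec_single_one_le {𝕜 : Type*} [RCLike 𝕜] (A : Matrix n n 𝕜) (i : n) :
    ‖toLp 2 (A *ᵥ Pi.single i 1)‖ ≤ ‖toEuclideanCLM (𝕜 := 𝕜) (n := n) A‖ :=
  calc ‖toLp 2 (A *ᵥ Pi.single i 1)‖
      = ‖toEuclideanCLM (𝕜 := 𝕜) (n := n) A (toLp 2 (Pi.single i 1 : n → 𝕜))‖ := rfl
    _ ≤ ‖toEuclideanCLM (𝕜 := 𝕜) (n := n) A‖ * ‖toLp 2 (Pi.single i 1 : n → 𝕜)‖ :=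
        (toEuclideanCLM (𝕜 := 𝕜) (n := n) A).le_opNorm _
    _ = ‖toEuclideanCLM (𝕜 := 𝕜) (n := n) A‖ := by simp

end Matrix

/-- Approximate eigenvector property of `M_n^r = Ψ Λ Ψᵀ`: if `E = ΨᵀΨ − Id`, `C = ‖E‖_op²`,
and `K` bounds all `|λ_i|`, then `‖M_n^r u_i − λ_i u_i‖₂² ≤ K²(√C + 1)C` for every column
`u_i` of `Ψ`. -/
theorem stmt2 (n r : ℕ) (lam : Fin r → ℝ) (Ψ : Matrix (Fin n) (Fin r) ℝ) (K C : ℝ)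
    (hK : ∀ i, |lam i| ≤ K)
    (hC : C = ‖Matrix.toEuclideanCLM (𝕜 := ℝ) (n := Fin r) (Ψᵀ * Ψ - 1)‖ ^ 2)
    (i : Fin r) :
    ∑ j, ((Ψ * Matrix.diagonal lam * Ψᵀ).mulVec (fun j => Ψ j i) j
        - lam i * Ψ j i) ^ 2
      ≤ K ^ 2 * (Real.sqrt C + 1) * C := by
  set w := (Ψᵀ * Ψ - 1) *ᵥ Pi.single i 1
  have hnormE : ‖toEuclideanCLM (𝕜 := ℝ) (n := Fin r) (Ψᵀ * Ψ - 1)‖ = √C := by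
    rw [hC, Real.sqrt_sq (norm_nonneg _)]
  have hw : ‖toLp 2 w‖ ^ 2 ≤ C :=
    hC ▸ pow_le_pow_left₀ (norm_nonneg _) (norm_toLp_mulVec_single_one_le _ i) 2
  calc ∑ j, ((Ψ * diagonal lam * Ψᵀ).mulVec (fun j => Ψ j i) j - lam i * Ψ j i) ^ 2
      = ‖toLp 2 (Ψ *ᵥ (diagonal lam *ᵥ w))‖ ^ 2 := by
        rw [EuclideanSpace.real_norm_sq_eq, ← mul_diagonal_mul_transpose_mulVec_col_sub]
        rfl
    _ ≤ (1 + √C) * ‖toLp 2 (diagonal lam *ᵥ w)‖ ^ 2 := hnormE ▸ sq_norm_toLp_mulVec_le Ψ _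
    _ ≤ (1 + √C) * (K ^ 2 * ‖toLp 2 w‖ ^ 2) := by
        gcongr
        exact sq_norm_toLp_diagonal_mulVec_le hK w
    _ ≤ (1 + √C) * (K ^ 2 * C) := by gcongr
    _ = K ^ 2 * (√C + 1) * C := by ring
end

section
/- Let w = e_1, t_y ∈ [0, 1/(2√d)], y = t_y e_1 + √(1−t_y²) e_2, z = −√(1−t_y²) e_1 + t_y e_2, and t ∈ [−1, 1/2]. If v ∈ S^{d-1} satisfies ⟨v,y⟩ = t and ⟨v,z⟩/√(1−t²) ≥ 1/(2√d), then ⟨v,w⟩ < 0. -/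
open scoped RealInnerProductSpace

/-! Since `e₁ = t_y y - √(1 - t_y²) z`, we have `⟪v, w⟫ = t_y t - √(1 - t_y²) ⟪v, z⟫`. The
hypothesis on `⟪v, z⟫` bounds the subtracted term below by `√(1 - t_y²) √(1 - t²) / (2√d)`, and
this exceeds `t_y t` because `t_y ≤ 1/(2√d) ≤ 1/2` and `t ≤ 1/2`. -/

lemma inner_eq_mul_inner_sub_mul_inner {E : Type*} [NormedAddCommGroup E]
    [InnerProductSpace ℝ E] (e₁ e₂ v : E) {a b : ℝ} (hab : a ^ 2 + b ^ 2 = 1) :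
    ⟪v, e₁⟫ = a * ⟪v, a • e₁ + b • e₂⟫ - b * ⟪v, (-b) • e₁ + a • e₂⟫ := by
  simp only [inner_add_right, inner_smul_right]
  linear_combination -⟪v, e₁⟫ * hab

lemma mul_lt_mul_sqrt_one_sub_sq_mul_sqrt_one_sub_sq {a b c : ℝ} (hc : 0 < c)
    (ha : 0 ≤ a) (hac : a ≤ c) (hc₂ : c ≤ 1 / 2) (hb₁ : -1 < b) (hb₂ : b ≤ 1 / 2) :
    a * b < c * (√(1 - a ^ 2) * √(1 - b ^ 2)) := by
  have hpos : 0 < √(1 - a ^ 2) * √(1 - b ^ 2) := by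
    apply mul_pos <;> apply Real.sqrt_pos.mpr <;> nlinarith
  rcases le_or_gt b 0 with hb | hb
  · nlinarith [mul_pos hc hpos]
  · have hlt : b < √(1 - a ^ 2) * √(1 - b ^ 2) := by
      rw [← Real.sqrt_mul (by nlinarith)]
      exact Real.lt_sqrt_of_sq_lt (by nlinarith)
    calc a * b ≤ c * b := by gcongr
      _ < c * (√(1 - a ^ 2) * √(1 - b ^ 2)) := by gcongr

lemma mul_sub_sqrt_one_sub_sq_mul_neg {a t p c : ℝ} (hc : 0 < c) (ha : 0 ≤ a) (hac : a ≤ c)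
    (hc₂ : c ≤ 1 / 2) (ht : t ≤ 1 / 2) (hp : c ≤ p / √(1 - t ^ 2)) :
    a * t - √(1 - a ^ 2) * p < 0 := by
  -- `√(1 - t²) = 0` would turn `hp` into `c ≤ 0`, as `p / 0 = 0`.
  have hsqrt : 0 < √(1 - t ^ 2) := by
    by_contra! h
    rw [le_antisymm h (Real.sqrt_nonneg _), div_zero] at hp
    linarith
  have ht₁ : -1 < t := by nlinarith [Real.sqrt_pos.mp hsqrt]
  have hcp : c * √(1 - t ^ 2) ≤ p := (le_div_iff₀ hsqrt).mp hp
  have key := mul_lt_mul_sqrt_one_sub_sq_mul_sqrt_one_sub_sq hc ha hac hc₂ ht₁ ht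
  nlinarith [Real.sqrt_nonneg (1 - a ^ 2)]

/-- Geometric lemma on the sphere: with `w = e₁`, `t_y ∈ [0, 1/(2√d)]`,
`y = t_y e₁ + √(1−t_y²) e₂`, `z = −√(1−t_y²) e₁ + t_y e₂` and `t ∈ [−1, 1/2]`, any unit
vector `v` with `⟨v,y⟩ = t` and `⟨v,z⟩/√(1−t²) ≥ 1/(2√d)` satisfies `⟨v,w⟩ < 0`. -/
theorem stmt14 (d : ℕ) (hd : 3 ≤ d)
    (t_y t : ℝ)
    (hty : t_y ∈ Set.Icc (0 : ℝ) (1 / (2 * Real.sqrt d)))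
    (ht : t ∈ Set.Icc (-1 : ℝ) (1 / 2))
    (w y z v : EuclideanSpace ℝ (Fin d))
    (hw : w = EuclideanSpace.single (⟨0, by omega⟩ : Fin d) (1 : ℝ))
    (hy : y = t_y • EuclideanSpace.single (⟨0, by omega⟩ : Fin d) (1 : ℝ)
        + Real.sqrt (1 - t_y ^ 2) • EuclideanSpace.single (⟨1, by omega⟩ : Fin d) (1 : ℝ))
    (hz : z = (-Real.sqrt (1 - t_y ^ 2)) • EuclideanSpace.single (⟨0, by omega⟩ : Fin d) (1 : ℝ)
        + t_y • EuclideanSpace.single (⟨1, by omega⟩ : Fin d) (1 : ℝ))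
    (hvy : ⟪v, y⟫ = t)
    (hvz : 1 / (2 * Real.sqrt d) ≤ ⟪v, z⟫ / Real.sqrt (1 - t ^ 2)) :
    ⟪v, w⟫ < 0 := by
  have hsqrt_d : 1 ≤ Real.sqrt d := Real.one_le_sqrt.mpr (by exact_mod_cast (by omega : 1 ≤ d))
  have hc : 0 < 1 / (2 * Real.sqrt d) := by positivity
  have hc₂ : 1 / (2 * Real.sqrt d) ≤ 1 / 2 := by gcongr; linarith
  have hty_sq : t_y ^ 2 + Real.sqrt (1 - t_y ^ 2) ^ 2 = 1 := by
    rw [Real.sq_sqrt (by nlinarith [hty.1, hty.2])]; ring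
  subst hw hy hz
  rw [inner_eq_mul_inner_sub_mul_inner _ _ v hty_sq, hvy]
  exact mul_sub_sqrt_one_sub_sq_mul_neg hc hty.1 hty.2 hc₂ ht.2 hvz
end
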